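/- arXiv:math/0309243 — 2 statements merged into one kernel-verified Lean document; each statement's English description precedes it below -/
import Mathlib

section
/- Let f ∈ O_{ℂ²,0} be a reduced analytic germ with f(0)=0 and let (S,0) ⊂ (ℂ³,0) be its stabilization {f(x,y) − z² = 0}. For each i ≥ 0, the ℂ-vector space {H = h₁ + z·h₂ : h₁,h₂ ∈ O_{ℂ²,0}, v(H) ≥ i} decomposes as the direct sum {h₁ ∈ O_{ℂ²,0} : v(h₁) ≥ i} ⊕ z·{h₂ ∈ O_{ℂ²,0} : v(z·h₂) ≥ i}, where v denotes the minimal order along arcs on (S,0). Consequently the Poincaré series of the arc filtration on these germs is the sum of the Poincaré series of the induced filtrations on O_{ℂ²,0} and on z·O_{ℂ²,0}. -/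
open Filter
open scoped Classical

/-- An arc on the hypersurface `{f = 0} ⊆ ℂ^N`: a germ of an analytic map
`φ : (ℂ,0) → (ℂ^N,0)` with `f ∘ φ ≡ 0` near `0`. -/
structure Arc (N : ℕ) (f : (Fin N → ℂ) → ℂ) where
  toFun : ℂ → Fin N → ℂ
  analyticAt : AnalyticAt ℂ toFun 0
  map_zero : toFun 0 = 0
  vanish : ∀ᶠ τ in nhds 0, f (toFun τ) = 0

/-- The order of vanishing at `0` of a germ `ℂ → ℂ`: the exponent of the first
nonvanishing Taylor term, `⊤` for the zero germ (junk value `0` if not analytic). -/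
noncomputable def ord (h : ℂ → ℂ) : ℕ∞ :=
  if hh : AnalyticAt ℂ h 0 then analyticOrderAt h 0 else 0

/-- `v(g)`: the minimal order of vanishing of `g` along arcs on `{f = 0} ⊆ ℂ^N`. -/
noncomputable def vArc (N : ℕ) (f g : (Fin N → ℂ) → ℂ) : ℕ∞ :=
  ⨅ ψ : Arc N f, ord (g ∘ ψ.toFun)

/-- The `i`-th piece `F_i` of the arc filtration: analytic germs `g` with `v(g) ≥ i`. -/
def arcFiltration (N : ℕ) (f : (Fin N → ℂ) → ℂ) (i : ℕ) :
    Set ((Fin N → ℂ) → ℂ) :=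
  {g | AnalyticAt ℂ g 0 ∧ (i : ℕ∞) ≤ vArc N f g}

/-- `dimQuotEq F i d` says that `dim_ℂ (F i / F (i+1)) = d`: there are `d` elements of
`F i` such that every element of `F i` has a unique expression as a linear combination
of them modulo `F (i+1)`. -/
def dimQuotEq {M : Type*} [AddCommGroup M] [Module ℂ M]
    (F : ℕ → Set M) (i d : ℕ) : Prop :=
  ∃ b : Fin d → M, (∀ k, b k ∈ F i) ∧
    ∀ g ∈ F i, ∃! c : Fin d → ℂ, g - ∑ k, c k • b k ∈ F (i + 1)

/-- The stabilization `{f(x,y) - z² = 0} ⊆ ℂ³` of the plane curve `{f = 0}`. -/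
def stab (f : (Fin 2 → ℂ) → ℂ) : (Fin 3 → ℂ) → ℂ :=
  fun w => f ![w 0, w 1] - w 2 ^ 2

/-- A reduced (squarefree) analytic germ at `0`: no square of a nonunit divides it. -/
def SquarefreeGerm {N : ℕ} (f : (Fin N → ℂ) → ℂ) : Prop :=
  ∀ u : (Fin N → ℂ) → ℂ, AnalyticAt ℂ u 0 → u 0 = 0 →
    ¬ ∃ w : (Fin N → ℂ) → ℂ, AnalyticAt ℂ w 0 ∧
      ∀ᶠ x in nhds 0, f x = u x * u x * w x

/-- Germs of the form `h₁ + z·h₂` (i.e. `O_{S,0} = O_{ℂ²,0} ⊕ z·O_{ℂ²,0}`) with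
`v ≥ i` on the stabilization `S = {f(x,y) - z² = 0}`. -/
def FS (f : (Fin 2 → ℂ) → ℂ) (i : ℕ) : Set ((Fin 3 → ℂ) → ℂ) :=
  {H | (∃ h₁ h₂ : (Fin 2 → ℂ) → ℂ, AnalyticAt ℂ h₁ 0 ∧ AnalyticAt ℂ h₂ 0 ∧
          H = fun w => h₁ ![w 0, w 1] + w 2 * h₂ ![w 0, w 1]) ∧
        (i : ℕ∞) ≤ vArc 3 (stab f) H}

/-- Germs of the form `h₁` (the summand `O_{ℂ²,0}`) with `v ≥ i`. -/
def FA (f : (Fin 2 → ℂ) → ℂ) (i : ℕ) : Set ((Fin 3 → ℂ) → ℂ) :=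
  {H | (∃ h₁ : (Fin 2 → ℂ) → ℂ, AnalyticAt ℂ h₁ 0 ∧
          H = fun w => h₁ ![w 0, w 1]) ∧
        (i : ℕ∞) ≤ vArc 3 (stab f) H}

/-- Germs of the form `z·h₂` (the summand `z·O_{ℂ²,0}`) with `v ≥ i`. -/
def FB (f : (Fin 2 → ℂ) → ℂ) (i : ℕ) : Set ((Fin 3 → ℂ) → ℂ) :=
  {H | (∃ h₂ : (Fin 2 → ℂ) → ℂ, AnalyticAt ℂ h₂ 0 ∧
          H = fun w => w 2 * h₂ ![w 0, w 1]) ∧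
        (i : ℕ∞) ≤ vArc 3 (stab f) H}

/-! The involution `(x, y, z) ↦ (x, y, -z)` preserves `S`, so it permutes the arcs on `S` and
leaves `v` invariant. It fixes `h₁` and negates `z·h₂`, hence `v(h₁ - z·h₂) = v(h₁ + z·h₂)`.
As `v(g + h) ≥ min (v g) (v h)` and `v(c • g) ≥ v g`, writing `h₁` and `z·h₂`
as half the sum and half the difference of `h₁ ± z·h₂` gives
`v(h₁ + z·h₂) = min (v h₁) (v (z·h₂))`. The count of dimensions is then formal: bases of the
graded pieces of the two summands concatenate to a basis of the graded piece of the sum. -/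

lemma ord_eq_analyticOrderAt (h : ℂ → ℂ) : ord h = analyticOrderAt h 0 := by
  by_cases hh : AnalyticAt ℂ h 0 <;> simp [ord, hh, analyticOrderAt_of_not_analyticAt]

lemma min_ord_le_ord_add (g h : ℂ → ℂ) : min (ord g) (ord h) ≤ ord (g + h) := by
  simpa only [ord_eq_analyticOrderAt] using le_analyticOrderAt_add

lemma ord_le_ord_const_smul (c : ℂ) (h : ℂ → ℂ) : ord h ≤ ord (c • h) := by
  by_cases hh : AnalyticAt ℂ h 0
  · have hsmul := analyticOrderAt_smul (analyticAt_const (v := c)) hh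
    simp only [ord_eq_analyticOrderAt]
    exact hsmul ▸ le_add_self
  · simp [ord, hh]

namespace Arc

variable {N : ℕ} {f : (Fin N → ℂ) → ℂ}

noncomputable def comp (σ : (Fin N → ℂ) →L[ℂ] (Fin N → ℂ)) (hσ : ∀ x, f (σ x) = f x)
    (ψ : Arc N f) : Arc N f where
  toFun := σ ∘ ψ.toFun
  analyticAt := (σ.analyticAt _).comp ψ.analyticAt
  map_zero := by simp [ψ.map_zero]
  vanish := by simpa [hσ] using ψ.vanish

end Arc

section vArc

variable {N : ℕ} {f : (Fin N → ℂ) → ℂ}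

lemma min_vArc_le_vArc_add (g h : (Fin N → ℂ) → ℂ) :
    min (vArc N f g) (vArc N f h) ≤ vArc N f (g + h) :=
  le_iInf fun ψ => (min_le_min (iInf_le _ ψ) (iInf_le _ ψ)).trans (min_ord_le_ord_add _ _)

lemma vArc_le_vArc_const_smul (c : ℂ) (g : (Fin N → ℂ) → ℂ) :
    vArc N f g ≤ vArc N f (c • g) :=
  le_iInf fun ψ => (iInf_le _ ψ).trans (ord_le_ord_const_smul c _)

lemma vArc_le_vArc_comp {σ : (Fin N → ℂ) →L[ℂ] (Fin N → ℂ)} (hσ : ∀ x, f (σ x) = f x)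
    (g : (Fin N → ℂ) → ℂ) : vArc N f g ≤ vArc N f (g ∘ σ) :=
  le_iInf fun ψ => iInf_le _ (ψ.comp σ hσ)

lemma vArc_add_eq_min_of_comp {σ : (Fin N → ℂ) →L[ℂ] (Fin N → ℂ)} (hσ : ∀ x, f (σ x) = f x)
    {g h : (Fin N → ℂ) → ℂ} (hg : g ∘ σ = g) (hh : h ∘ σ = -h) :
    vArc N f (g + h) = min (vArc N f g) (vArc N f h) := by
  have hflip : vArc N f (g + h) ≤ vArc N f (g - h) := by
    have : (g + h) ∘ σ = g - h := by
      rw [Pi.add_comp, hg, hh, sub_eq_add_neg]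
    exact this ▸ vArc_le_vArc_comp hσ (g + h)
  have hcomb : ∀ s : ℂ,
      vArc N f (g + h) ≤ vArc N f ((2 : ℂ)⁻¹ • ((g + h) + s • (g - h))) := fun s =>
    ((le_min le_rfl (hflip.trans (vArc_le_vArc_const_smul s _))).trans
      (min_vArc_le_vArc_add _ _)).trans (vArc_le_vArc_const_smul _ _)
  refine le_antisymm (le_min ?_ ?_) (min_vArc_le_vArc_add g h)
  · exact (hcomb 1).trans_eq (by congr 1; module)
  · exact (hcomb (-1)).trans_eq (by congr 1; module)

end vArc

noncomputable def zFlip : (Fin 3 → ℂ) →L[ℂ] (Fin 3 → ℂ) :=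
  ContinuousLinearMap.pi ![ContinuousLinearMap.proj 0, ContinuousLinearMap.proj 1,
    -ContinuousLinearMap.proj 2]

lemma stab_zFlip (f : (Fin 2 → ℂ) → ℂ) (w : Fin 3 → ℂ) : stab f (zFlip w) = stab f w := by
  simp [stab, zFlip]

lemma vArc_stab_add (f h₁ h₂ : (Fin 2 → ℂ) → ℂ) :
    vArc 3 (stab f) (fun w => h₁ ![w 0, w 1] + w 2 * h₂ ![w 0, w 1]) =
      min (vArc 3 (stab f) fun w => h₁ ![w 0, w 1])
        (vArc 3 (stab f) fun w => w 2 * h₂ ![w 0, w 1]) :=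
  vArc_add_eq_min_of_comp (stab_zFlip f) (by funext w; simp [zFlip])
    (by funext w; simp [zFlip])

lemma dimQuotEq_add_of_splits {M : Type*} [AddCommGroup M] [Module ℂ M] {F : ℕ → Set M}
    {P Q : Submodule ℂ M} {i a b : ℕ}
    (hsplit : ∀ g ∈ F i, ∃ x ∈ P, ∃ y ∈ Q, x + y = g)
    (hcompat : ∀ j, ∀ x ∈ P, ∀ y ∈ Q, x + y ∈ F j ↔ x ∈ F j ∧ y ∈ F j)
    (hP : dimQuotEq (fun j => F j ∩ P) i a) (hQ : dimQuotEq (fun j => F j ∩ Q) i b) :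
    dimQuotEq F i (a + b) := by
  obtain ⟨bP, hbP, huP⟩ := hP
  obtain ⟨bQ, hbQ, huQ⟩ := hQ
  refine ⟨Fin.append bP bQ, Fin.addCases (by simpa using fun k => (hbP k).1)
    (by simpa using fun k => (hbQ k).1), ?_⟩
  rintro _ hg
  obtain ⟨x, hx, y, hy, rfl⟩ := hsplit _ hg
  have hres : ∀ c : Fin (a + b) → ℂ, (x + y) - ∑ k, c k • Fin.append bP bQ k ∈ F (i + 1) ↔
      x - ∑ k, c (Fin.castAdd b k) • bP k ∈ F (i + 1) ∩ P ∧
        y - ∑ k, c (Fin.natAdd a k) • bQ k ∈ F (i + 1) ∩ Q := by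
    intro c
    have hxP : x - ∑ k, c (Fin.castAdd b k) • bP k ∈ P :=
      P.sub_mem hx (P.sum_mem fun k _ => P.smul_mem _ (hbP k).2)
    have hyQ : y - ∑ k, c (Fin.natAdd a k) • bQ k ∈ Q :=
      Q.sub_mem hy (Q.sum_mem fun k _ => Q.smul_mem _ (hbQ k).2)
    have hsum : (x + y) - ∑ k, c k • Fin.append bP bQ k =
        (x - ∑ k, c (Fin.castAdd b k) • bP k) + (y - ∑ k, c (Fin.natAdd a k) • bQ k) := by
      simp only [Fin.sum_univ_add, Fin.append_left, Fin.append_right]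
      abel
    rw [hsum, hcompat _ _ hxP _ hyQ, Set.mem_inter_iff, Set.mem_inter_iff]
    simp only [SetLike.mem_coe, hxP, hyQ, and_true]
  obtain ⟨hxF, hyF⟩ := (hcompat i x hx y hy).1 hg
  obtain ⟨cP, hcP, huP⟩ := huP x ⟨hxF, hx⟩
  obtain ⟨cQ, hcQ, huQ⟩ := huQ y ⟨hyF, hy⟩
  refine ⟨Fin.append cP cQ, (hres _).2 (by simpa using ⟨hcP, hcQ⟩), fun c hc => ?_⟩
  obtain ⟨hcP', hcQ'⟩ := (hres c).1 hc
  rw [← Fin.append_castAdd_natAdd (f := c), huP _ hcP', huQ _ hcQ']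

def xyGerms : Submodule ℂ ((Fin 3 → ℂ) → ℂ) where
  carrier := {H | ∃ h : (Fin 2 → ℂ) → ℂ, AnalyticAt ℂ h 0 ∧ H = fun w => h ![w 0, w 1]}
  add_mem' := by
    rintro _ _ ⟨g, hg, rfl⟩ ⟨h, hh, rfl⟩
    exact ⟨g + h, hg.add hh, rfl⟩
  zero_mem' := ⟨0, analyticAt_const, rfl⟩
  smul_mem' := by
    rintro c _ ⟨h, hh, rfl⟩
    exact ⟨c • h, hh.const_smul, rfl⟩

def zMulXYGerms : Submodule ℂ ((Fin 3 → ℂ) → ℂ) where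
  carrier := {H | ∃ h : (Fin 2 → ℂ) → ℂ, AnalyticAt ℂ h 0 ∧ H = fun w => w 2 * h ![w 0, w 1]}
  add_mem' := by
    rintro _ _ ⟨g, hg, rfl⟩ ⟨h, hh, rfl⟩
    exact ⟨g + h, hg.add hh, by funext w; simp [mul_add]⟩
  zero_mem' := ⟨0, analyticAt_const, by funext w; simp⟩
  smul_mem' := by
    rintro c _ ⟨h, hh, rfl⟩
    exact ⟨c • h, hh.const_smul, by funext w; simp [mul_left_comm]⟩

lemma mem_FS_iff_of_mem_xyGerms {f : (Fin 2 → ℂ) → ℂ} {i : ℕ} {H : (Fin 3 → ℂ) → ℂ}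
    (hH : H ∈ xyGerms) : H ∈ FS f i ↔ (i : ℕ∞) ≤ vArc 3 (stab f) H := by
  obtain ⟨h, hh, rfl⟩ := hH
  exact and_iff_right ⟨h, 0, hh, analyticAt_const, by funext w; simp⟩

lemma mem_FS_iff_of_mem_zMulXYGerms {f : (Fin 2 → ℂ) → ℂ} {i : ℕ} {H : (Fin 3 → ℂ) → ℂ}
    (hH : H ∈ zMulXYGerms) : H ∈ FS f i ↔ (i : ℕ∞) ≤ vArc 3 (stab f) H := by
  obtain ⟨h, hh, rfl⟩ := hH
  exact and_iff_right ⟨0, h, analyticAt_const, hh, by funext w; simp⟩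

lemma FA_eq_FS_inter (f : (Fin 2 → ℂ) → ℂ) : FA f = fun i => FS f i ∩ xyGerms := by
  ext i H
  exact ⟨fun hH => ⟨(mem_FS_iff_of_mem_xyGerms hH.1).2 hH.2, hH.1⟩,
    fun hH => ⟨hH.2, (mem_FS_iff_of_mem_xyGerms hH.2).1 hH.1⟩⟩

lemma FB_eq_FS_inter (f : (Fin 2 → ℂ) → ℂ) : FB f = fun i => FS f i ∩ zMulXYGerms := by
  ext i H
  exact ⟨fun hH => ⟨(mem_FS_iff_of_mem_zMulXYGerms hH.1).2 hH.2, hH.1⟩,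
    fun hH => ⟨hH.2, (mem_FS_iff_of_mem_zMulXYGerms hH.2).1 hH.1⟩⟩

lemma exists_add_eq_of_mem_FS {f : (Fin 2 → ℂ) → ℂ} {i : ℕ} {H : (Fin 3 → ℂ) → ℂ}
    (hH : H ∈ FS f i) : ∃ x ∈ xyGerms, ∃ y ∈ zMulXYGerms, x + y = H := by
  obtain ⟨⟨h₁, h₂, hh₁, hh₂, rfl⟩, -⟩ := hH
  exact ⟨_, ⟨h₁, hh₁, rfl⟩, _, ⟨h₂, hh₂, rfl⟩, rfl⟩

lemma add_mem_FS_iff (f : (Fin 2 → ℂ) → ℂ) (i : ℕ) {x y : (Fin 3 → ℂ) → ℂ}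
    (hx : x ∈ xyGerms) (hy : y ∈ zMulXYGerms) :
    x + y ∈ FS f i ↔ x ∈ FS f i ∧ y ∈ FS f i := by
  obtain ⟨h₁, hh₁, rfl⟩ := hx
  obtain ⟨h₂, hh₂, rfl⟩ := hy
  rw [mem_FS_iff_of_mem_xyGerms ⟨h₁, hh₁, rfl⟩, mem_FS_iff_of_mem_zMulXYGerms ⟨h₂, hh₂, rfl⟩,
    ← le_min_iff, ← vArc_stab_add]
  exact and_iff_right ⟨h₁, h₂, hh₁, hh₂, rfl⟩

theorem arcFiltration_stabilization_direct_sum_general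
    (f : (Fin 2 → ℂ) → ℂ) :
    (∀ (i : ℕ) (h₁ h₂ : (Fin 2 → ℂ) → ℂ),
      AnalyticAt ℂ h₁ 0 → AnalyticAt ℂ h₂ 0 →
      ((i : ℕ∞) ≤ vArc 3 (stab f) (fun w => h₁ ![w 0, w 1] + w 2 * h₂ ![w 0, w 1]) ↔
        (i : ℕ∞) ≤ vArc 3 (stab f) (fun w => h₁ ![w 0, w 1]) ∧
        (i : ℕ∞) ≤ vArc 3 (stab f) (fun w => w 2 * h₂ ![w 0, w 1]))) ∧
    ∀ (i a b : ℕ), dimQuotEq (FA f) i a → dimQuotEq (FB f) i b →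
      dimQuotEq (FS f) i (a + b) := by
  refine ⟨fun i h₁ h₂ _ _ => by rw [vArc_stab_add, le_min_iff], fun i a b hA hB => ?_⟩
  rw [FA_eq_FS_inter] at hA
  rw [FB_eq_FS_inter] at hB
  exact dimQuotEq_add_of_splits (fun _ => exists_add_eq_of_mem_FS)
    (fun j _ hx _ hy => add_mem_FS_iff f j hx hy) hA hB

/-- For the stabilization `(S,0) = {f(x,y) - z² = 0}` of a reduced
plane curve germ, the `i`-th piece of the arc filtration on `O_{S,0} = O_{ℂ²,0} ⊕
z·O_{ℂ²,0}` decomposes as the direct sum of the induced pieces on the two summands: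
`H = h₁ + z·h₂` has `v(H) ≥ i` iff `v(h₁) ≥ i` and `v(z·h₂) ≥ i`. Consequently the
Poincaré series of the arc filtration is the sum of the Poincaré series of the induced
filtrations on `O_{ℂ²,0}` and on `z·O_{ℂ²,0}`. -/
theorem arcFiltration_stabilization_direct_sum
    (f : (Fin 2 → ℂ) → ℂ) (hf : AnalyticAt ℂ f 0) (hf0 : f 0 = 0)
    (hred : SquarefreeGerm f) :
    (∀ (i : ℕ) (h₁ h₂ : (Fin 2 → ℂ) → ℂ),
      AnalyticAt ℂ h₁ 0 → AnalyticAt ℂ h₂ 0 →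
      ((i : ℕ∞) ≤ vArc 3 (stab f) (fun w => h₁ ![w 0, w 1] + w 2 * h₂ ![w 0, w 1]) ↔
        (i : ℕ∞) ≤ vArc 3 (stab f) (fun w => h₁ ![w 0, w 1]) ∧
        (i : ℕ∞) ≤ vArc 3 (stab f) (fun w => w 2 * h₂ ![w 0, w 1]))) ∧
    ∀ (i a b : ℕ), dimQuotEq (FA f) i a → dimQuotEq (FB f) i b →
      dimQuotEq (FS f) i (a + b) :=
  arcFiltration_stabilization_direct_sum_general f
end

section
/- For the parabolic surface singularity T_{2,4,4} (= X₉), i.e., the surface germ (V,0) ⊂ (ℂ³,0) defined by x⁴ + y⁴ + z² = 0, the Poincaré series of the arc filtration is P_{V,0}(t) = (1 − t⁴) / ( (1 − t)²(1 − t²) ), as an identity of formal power series. -/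
open Filter
open scoped Classical

/-!
With weights `(1, 1, 2)` the germ `f = x⁴ + y⁴ + z²` is weighted homogeneous of degree `4`, and
every arc on `V` has the form `τ ↦ (τ u₀(τ), τ u₁(τ), τ² u₂(τ))` with `u(τ)` on `V`: the
`z`-coordinate vanishes to order `2` because `z² = -(x⁴ + y⁴)`. Expanding a germ `g` along such
arcs by its Taylor polynomial shows that `v(g) ≥ i` iff the weighted homogeneous components of `g`
of degree `< i` vanish on `V`. Hence `F_i / F_{i+1}` is the degree `i` part of the graded ring
`ℂ[x, y, z] / (f)`, with basis `xᵃyᵇ` (`a + b = i`) and `xᵃyᵇz` (`a + b = i - 2`), of dimension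
`(i + 1) + (i - 1)`, and `∑ ((i + 1) + (i - 1)) tⁱ = (1 + t²) / (1 - t)²`.
-/

open Asymptotics
open scoped Topology

section OneVariable

variable {𝕜 : Type*} [NontriviallyNormedField 𝕜]

lemma isBigO_pow_pow_of_le {m n : ℕ} (h : m ≤ n) :
    (fun τ : 𝕜 => τ ^ n) =O[𝓝 0] fun τ => τ ^ m := by
  rcases h.eq_or_lt with rfl | hlt
  · exact isBigO_refl _ _
  · exact (isLittleO_pow_pow hlt).isBigO

lemma not_isBigO_pow_pow_of_lt {m n : ℕ} (h : m < n) :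
    ¬ (fun τ : 𝕜 => τ ^ m) =O[𝓝 0] fun τ => τ ^ n := by
  intro hO
  refine isLittleO_irrefl' ?_ (hO.trans_isLittleO (isLittleO_pow_pow h))
  refine (Filter.Eventually.frequently (f := 𝓝[≠] (0 : 𝕜)) ?_).filter_mono nhdsWithin_le_nhds
  filter_upwards [self_mem_nhdsWithin] with τ (hτ : τ ≠ 0)
  exact norm_ne_zero_iff.mpr (pow_ne_zero _ hτ)

lemma isBigO_mul_pow_pow_succ_iff {c : 𝕜} {j : ℕ} :
    ((fun τ : 𝕜 => c * τ ^ j) =O[𝓝 0] fun τ => τ ^ (j + 1)) ↔ c = 0 := by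
  refine ⟨fun h => by_contra fun hc => ?_, fun hc => by simpa [hc] using isBigO_zero _ _⟩
  refine not_isBigO_pow_pow_of_lt (𝕜 := 𝕜) (Nat.lt_succ_self j) ?_
  refine ((isBigO_const_mul_self c⁻¹ _ _).trans h).congr_left fun τ => ?_
  rw [← mul_assoc, inv_mul_cancel₀ hc, one_mul]

lemma coeff_eq_zero_of_isBigO_sum_pow {c : ℕ → 𝕜} {i : ℕ}
    (h : (fun τ : 𝕜 => ∑ j ∈ Finset.range i, c j * τ ^ j) =O[𝓝 0] fun τ => τ ^ i) :
    ∀ j < i, c j = 0 := by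
  induction i with
  | zero => simp
  | succ i ih =>
    simp only [Finset.sum_range_succ] at h
    have hlow : ∀ j < i, c j = 0 := ih <| by
      simpa using (h.trans (isBigO_pow_pow_of_le i.le_succ)).sub
        ((isBigO_refl (fun τ : 𝕜 => τ ^ i) _).const_mul_left (c i))
    have htop : c i = 0 := isBigO_mul_pow_pow_succ_iff.mp <| h.congr_left fun τ => by
      rw [Finset.sum_eq_zero fun j hj => by rw [hlow j (Finset.mem_range.mp hj), zero_mul],
        zero_add]
    intro j hj
    rcases (Nat.lt_succ_iff.mp hj).lt_or_eq with hj | rfl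
    exacts [hlow j hj, htop]

lemma AnalyticAt.natCast_le_analyticOrderAt_iff_isBigO {h : 𝕜 → 𝕜} (hh : AnalyticAt 𝕜 h 0)
    (n : ℕ) : n ≤ analyticOrderAt h 0 ↔ h =O[𝓝 0] fun τ => τ ^ n := by
  constructor
  · intro hn
    obtain ⟨g, hg, hfac⟩ := (natCast_le_analyticOrderAt hh).mp hn
    refine ((isBigO_refl (fun τ : 𝕜 => τ ^ n) _).mul
      (hg.continuousAt.isBigO_one (F := 𝕜))).congr' ?_ (by simp)
    filter_upwards [hfac] with τ hτ
    simp [hτ]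
  · intro hO
    by_contra hlt
    obtain ⟨m, hm⟩ := ENat.ne_top_iff_exists.mp (ne_top_of_lt (not_le.mp hlt))
    rw [← hm, Nat.cast_le, not_le] at hlt
    obtain ⟨g, hg, hg0, hfac⟩ := hh.analyticOrderAt_eq_natCast.mp hm.symm
    refine not_isBigO_pow_pow_of_lt (𝕜 := 𝕜) hlt ?_
    have hinv : (fun τ => (g τ)⁻¹) =O[𝓝 0] fun _ => (1 : 𝕜) :=
      (hg.continuousAt.inv₀ hg0).isBigO_one 𝕜
    refine (hinv.mul hO).congr' ?_ (by simp)
    filter_upwards [hfac, hg.continuousAt.eventually_ne hg0] with τ hτ hgτ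
    simp only [hτ, sub_zero, smul_eq_mul]
    field_simp

end OneVariable

section WeightedCurve

open MvPolynomial

variable {𝕜 : Type*} [NontriviallyNormedField 𝕜] {σ : Type*}

def weightedCurve (w : σ → ℕ) (q : σ → 𝕜) (τ : 𝕜) : σ → 𝕜 := fun k => τ ^ w k * q k

lemma eval_weightedCurve_monomial (w : σ → ℕ) (q : σ → 𝕜) (τ : 𝕜) (m : σ →₀ ℕ) (a : 𝕜) :
    eval (weightedCurve w q τ) (monomial m a) = τ ^ Finsupp.weight w m * eval q (monomial m a) := by
  simp only [eval_monomial, weightedCurve, Finsupp.weight_apply, Finsupp.sum, Finsupp.prod,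
    smul_eq_mul, mul_pow, ← pow_mul, Finset.prod_mul_distrib, Finset.prod_pow_eq_pow_sum,
    mul_comm (w _)]
  ring

lemma MvPolynomial.IsWeightedHomogeneous.eval_weightedCurve {w : σ → ℕ} {p : MvPolynomial σ 𝕜}
    {j : ℕ} (hp : IsWeightedHomogeneous w p j) (q : σ → 𝕜) (τ : 𝕜) :
    eval (weightedCurve w q τ) p = τ ^ j * eval q p := by
  conv_lhs => rw [p.as_sum]
  conv_rhs => rw [p.as_sum]
  simp only [map_sum, Finset.mul_sum]
  refine Finset.sum_congr rfl fun m hm => ?_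
  rw [eval_weightedCurve_monomial, hp (mem_support_iff.mp hm)]

lemma isBigO_eval_weightedCurve {w : σ → ℕ} {p : MvPolynomial σ 𝕜} {i : ℕ}
    (hp : ∀ m ∈ p.support, i ≤ Finsupp.weight w m) {u : 𝕜 → σ → 𝕜} (hu : ContinuousAt u 0) :
    (fun τ => eval (weightedCurve w (u τ) τ) p) =O[𝓝 0] fun τ => τ ^ i := by
  have hsum (τ : 𝕜) : eval (weightedCurve w (u τ) τ) p =
      ∑ m ∈ p.support, τ ^ Finsupp.weight w m * eval (u τ) (monomial m (p.coeff m)) := by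
    conv_lhs => rw [p.as_sum]
    simp only [map_sum, eval_weightedCurve_monomial]
  simp only [hsum]
  refine IsBigO.fun_sum fun m hm => ?_
  have hcoeff : (fun τ => eval (u τ) (monomial m (p.coeff m))) =O[𝓝 0] fun _ => (1 : 𝕜) :=
    ((continuous_eval _).continuousAt.comp hu).isBigO_one 𝕜
  simpa using (isBigO_pow_pow_of_le (𝕜 := 𝕜) (hp m hm)).mul hcoeff

lemma isBigO_eval_weightedCurve_sub_sum (w : σ → ℕ) (p : MvPolynomial σ 𝕜) (i : ℕ)
    {u : 𝕜 → σ → 𝕜} (hu : ContinuousAt u 0) :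
    (fun τ => eval (weightedCurve w (u τ) τ) p -
        ∑ j ∈ Finset.range i, τ ^ j * eval (u τ) (weightedHomogeneousComponent w j p))
      =O[𝓝 0] fun τ => τ ^ i := by
  set r := p - ∑ j ∈ Finset.range i, weightedHomogeneousComponent w j p
  have hr : ∀ m ∈ r.support, i ≤ Finsupp.weight w m := by
    intro m hm
    by_contra! hlt
    refine mem_support_iff.mp hm ?_
    simp [r, coeff_sum, coeff_weightedHomogeneousComponent, hlt]
  refine (isBigO_eval_weightedCurve hr hu).congr_left fun τ => ?_
  simp [r, map_sum,
    (weightedHomogeneousComponent_isWeightedHomogeneous _ _).eval_weightedCurve]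

lemma isBigO_weightedCurve [Fintype σ] {w : σ → ℕ} (hw : ∀ k, w k ≠ 0) {u : 𝕜 → σ → 𝕜}
    (hu : ContinuousAt u 0) : (fun τ => weightedCurve w (u τ) τ) =O[𝓝 0] fun τ => τ := by
  refine isBigO_pi.mpr fun k => ?_
  have hcoord : (fun τ => u τ k) =O[𝓝 0] fun _ => (1 : 𝕜) :=
    ((continuous_apply k).continuousAt.comp hu).isBigO_one 𝕜
  simpa [weightedCurve] using
    (isBigO_pow_pow_of_le (𝕜 := 𝕜) (Nat.one_le_iff_ne_zero.mpr (hw k))).mul hcoord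

end WeightedCurve

section TaylorPolynomial

open MvPolynomial

variable {𝕜 : Type*} [NontriviallyNormedField 𝕜] {σ : Type*} [Fintype σ] [DecidableEq σ]

noncomputable def taylorPolynomial (P : FormalMultilinearSeries 𝕜 (σ → 𝕜) 𝕜) (N : ℕ) :
    MvPolynomial σ 𝕜 :=
  ∑ n ∈ Finset.range N, ∑ r : Fin n → σ,
    C (P n fun l => Pi.single (r l) 1) * ∏ l, X (r l)

lemma eval_taylorPolynomial (P : FormalMultilinearSeries 𝕜 (σ → 𝕜) 𝕜) (N : ℕ) (q : σ → 𝕜) :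
    eval q (taylorPolynomial P N) = P.partialSum N q := by
  simp only [taylorPolynomial, FormalMultilinearSeries.partialSum, map_sum, map_mul, eval_C,
    map_prod, eval_X]
  refine Finset.sum_congr rfl fun n _ => ?_
  conv_rhs => rw [pi_eq_sum_univ' q, ContinuousMultilinearMap.map_sum]
  refine Finset.sum_congr rfl fun r _ => ?_
  rw [ContinuousMultilinearMap.map_smul_univ, smul_eq_mul, mul_comm]

lemma HasFPowerSeriesAt.isBigO_comp_sub_eval_taylorPolynomial {g : (σ → 𝕜) → 𝕜}
    {P : FormalMultilinearSeries 𝕜 (σ → 𝕜) 𝕜} (hP : HasFPowerSeriesAt g P 0) (N : ℕ)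
    {γ : 𝕜 → σ → 𝕜} (hγ : γ =O[𝓝 0] fun τ => τ) :
    (fun τ => g (γ τ) - eval (γ τ) (taylorPolynomial P N)) =O[𝓝 0] fun τ => τ ^ N := by
  have hγ0 : Tendsto γ (𝓝 0) (𝓝 0) := hγ.trans_tendsto tendsto_id
  refine (((hP.isBigO_sub_partialSum_pow N).comp_tendsto hγ0).trans
    (hγ.norm_left.pow N)).congr (fun τ => ?_) fun τ => rfl
  simp [eval_taylorPolynomial]

end TaylorPolynomial

section WeightedTaylor

open MvPolynomial

variable {𝕜 : Type*} [NontriviallyNormedField 𝕜] {σ : Type*} [Fintype σ] [DecidableEq σ]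
  {g : (σ → 𝕜) → 𝕜} {P : FormalMultilinearSeries 𝕜 (σ → 𝕜) 𝕜} {w : σ → ℕ}

lemma HasFPowerSeriesAt.isBigO_comp_weightedCurve_sub_sum (hP : HasFPowerSeriesAt g P 0)
    (hw : ∀ k, w k ≠ 0) {u : 𝕜 → σ → 𝕜} (hu : ContinuousAt u 0) {i N : ℕ} (hN : i ≤ N) :
    (fun τ => g (weightedCurve w (u τ) τ) - ∑ j ∈ Finset.range i,
        τ ^ j * eval (u τ) (weightedHomogeneousComponent w j (taylorPolynomial P N)))
      =O[𝓝 0] fun τ => τ ^ i := by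
  refine (((hP.isBigO_comp_sub_eval_taylorPolynomial N (isBigO_weightedCurve hw hu)).trans
    (isBigO_pow_pow_of_le hN)).add
    (isBigO_eval_weightedCurve_sub_sum w (taylorPolynomial P N) i hu)).congr_left fun τ => ?_
  ring

lemma HasFPowerSeriesAt.eval_weightedHomogeneousComponent_eq_zero (hP : HasFPowerSeriesAt g P 0)
    (hw : ∀ k, w k ≠ 0) {q : σ → 𝕜} {i N : ℕ} (hN : i ≤ N)
    (hq : (fun τ => g (weightedCurve w q τ)) =O[𝓝 0] fun τ => τ ^ i) :
    ∀ j < i, eval q (weightedHomogeneousComponent w j (taylorPolynomial P N)) = 0 := by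
  refine coeff_eq_zero_of_isBigO_sum_pow <|
    (hq.sub (hP.isBigO_comp_weightedCurve_sub_sum hw (continuousAt_const (y := q)) hN)).congr_left
      fun τ => ?_
  simp [mul_comm]

lemma HasFPowerSeriesAt.isBigO_comp_weightedCurve (hP : HasFPowerSeriesAt g P 0)
    (hw : ∀ k, w k ≠ 0) {u : 𝕜 → σ → 𝕜} (hu : ContinuousAt u 0) {i : ℕ}
    (hlow : ∀ᶠ τ in 𝓝 0, ∀ j < i,
      eval (u τ) (weightedHomogeneousComponent w j (taylorPolynomial P i)) = 0) :
    (fun τ => g (weightedCurve w (u τ) τ)) =O[𝓝 0] fun τ => τ ^ i := by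
  refine (hP.isBigO_comp_weightedCurve_sub_sum hw hu le_rfl).congr' ?_ EventuallyEq.rfl
  filter_upwards [hlow] with τ hτ
  rw [Finset.sum_eq_zero fun j hj => by rw [hτ j (Finset.mem_range.mp hj), mul_zero], sub_zero]

end WeightedTaylor

lemma eq_zero_of_forall_sum_mul_natCast_pow_eq_zero {n : ℕ} {c : Fin n → ℂ}
    (h : ∀ m : ℕ, ∑ a, c a * (m : ℂ) ^ (a : ℕ) = 0) : c = 0 := by
  open Polynomial in
  set p : ℂ[X] := ∑ a, C (c a) * X ^ (a : ℕ)
  have hp : p = 0 := by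
    refine eq_zero_of_infinite_isRoot p (Set.infinite_of_injective_forall_mem
      Nat.cast_injective fun m : ℕ => ?_)
    simpa [p, eval_finsetSum] using h m
  funext a
  have := congrArg (coeff · a) hp
  simpa [p, finsetSum_coeff, coeff_C_mul_X_pow, Fin.val_inj] using this

lemma le_vArc_iff {N : ℕ} {f g : (Fin N → ℂ) → ℂ} (hg : AnalyticAt ℂ g 0) (i : ℕ) :
    (i : ℕ∞) ≤ vArc N f g ↔ ∀ ψ : Arc N f, (g ∘ ψ.toFun) =O[𝓝 0] fun τ => τ ^ i := by
  refine le_iInf_iff.trans (forall_congr' fun ψ => ?_)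
  have hgψ : AnalyticAt ℂ (g ∘ ψ.toFun) 0 :=
    (ψ.map_zero ▸ hg : AnalyticAt ℂ g (ψ.toFun 0)).comp ψ.analyticAt
  rw [ord, dif_pos hgψ, hgψ.natCast_le_analyticOrderAt_iff_isBigO]

lemma dimQuotEq_of_linearIndependent {M W : Type*} [AddCommGroup M] [Module ℂ M]
    [AddCommGroup W] [Module ℂ W] {F : ℕ → Set M} {i d : ℕ} {b : Fin d → M} {v : Fin d → W}
    (hb : ∀ k, b k ∈ F i) (hv : LinearIndependent ℂ v)
    (h : ∀ g ∈ F i, ∃ s ∈ Submodule.span ℂ (Set.range v),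
      ∀ c : Fin d → ℂ, g - ∑ k, c k • b k ∈ F (i + 1) ↔ ∑ k, c k • v k = s) :
    dimQuotEq F i d := by
  refine ⟨b, hb, fun g hg => ?_⟩
  obtain ⟨s, hs, hgs⟩ := h g hg
  obtain ⟨c, hc⟩ := (Submodule.mem_span_range_iff_exists_fun ℂ).mp hs
  refine ⟨c, (hgs c).mpr hc, fun c' hc' => funext fun k => ?_⟩
  have hdiff : ∑ k, (c' k - c k) • v k = 0 := by
    simp [sub_smul, Finset.sum_sub_distrib, (hgs c').mp hc', hc]
  exact sub_eq_zero.mp (Fintype.linearIndependent_iff.mp hv _ hdiff k)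

lemma mk_mul_eq_one_sub_X_pow_four :
    (PowerSeries.mk fun i => (((i + 1) + (i - 1) : ℕ) : ℤ)) *
        ((1 - PowerSeries.X) ^ 2 * (1 - PowerSeries.X ^ 2)) = 1 - PowerSeries.X ^ 4 := by
  set A : PowerSeries ℤ := PowerSeries.mk fun n => ((1 + n).choose 1 : ℤ)
  have hA : A * (1 - PowerSeries.X) ^ 2 = 1 := PowerSeries.mk_add_choose_mul_one_sub_pow_eq_one ℤ 1
  have hsplit : (PowerSeries.mk fun i => (((i + 1) + (i - 1) : ℕ) : ℤ)) =
      A + PowerSeries.X ^ 2 * A := by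
    ext n
    rw [map_add, PowerSeries.coeff_X_pow_mul']
    split_ifs with hn <;>
      simp only [A, PowerSeries.coeff_mk, Nat.choose_one_right, Nat.cast_add, Nat.cast_one] <;>
      omega
  rw [hsplit]
  linear_combination (1 + PowerSeries.X ^ 2) * (1 - PowerSeries.X ^ 2) * hA

section T244

open MvPolynomial

def t244 : (Fin 3 → ℂ) → ℂ := fun w => w 0 ^ 4 + w 1 ^ 4 + w 2 ^ 2

def t244Weights : Fin 3 → ℕ := ![1, 1, 2]

lemma t244Weights_ne_zero : ∀ k, t244Weights k ≠ 0 := by decide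

lemma continuous_t244 : Continuous t244 := by unfold t244; fun_prop

lemma t244_weightedCurve (p : Fin 3 → ℂ) (τ : ℂ) :
    t244 (weightedCurve t244Weights p τ) = τ ^ 4 * t244 p := by
  simp only [t244, weightedCurve, t244Weights, Matrix.cons_val_zero, Matrix.cons_val_one,
    Matrix.cons_val, pow_one]
  ring

noncomputable def weightedCurveArc (p : Fin 3 → ℂ) (hp : t244 p = 0) : Arc 3 t244 where
  toFun := weightedCurve t244Weights p
  analyticAt := analyticAt_pi_iff.mpr fun k => by unfold weightedCurve; fun_prop
  map_zero := funext fun k => by simp [weightedCurve, t244Weights_ne_zero]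
  vanish := .of_forall fun τ => by rw [t244_weightedCurve, hp, mul_zero]

lemma Arc.exists_eq_weightedCurve (ψ : Arc 3 t244) :
    ∃ u : ℂ → Fin 3 → ℂ, ContinuousAt u 0 ∧
      ∀ᶠ τ in 𝓝 0, t244 (u τ) = 0 ∧ ψ.toFun τ = weightedCurve t244Weights (u τ) τ := by
  have hψ (k : Fin 3) : AnalyticAt ℂ (fun τ => ψ.toFun τ k) 0 := analyticAt_pi_iff.mp ψ.analyticAt k
  have hlin (k : Fin 3) : (fun τ => ψ.toFun τ k) =O[𝓝 0] fun τ => τ ^ 1 :=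
    ((hψ k).natCast_le_analyticOrderAt_iff_isBigO 1).mp <| Order.one_le_iff_ne_zero.mpr <|
      (hψ k).analyticOrderAt_ne_zero.mpr (congrFun ψ.map_zero k)
  -- `z² = -(x⁴ + y⁴)` along the arc forces `z = O(τ²)`
  have hquad : (fun τ => ψ.toFun τ 2) =O[𝓝 0] fun τ => τ ^ 2 := by
    have hsq : ((fun τ => ψ.toFun τ 2) ^ 2) =O[𝓝 0] ((fun τ : ℂ => τ ^ 2) ^ 2) := by
      refine (((hlin 0).pow 4).add ((hlin 1).pow 4)).neg_left.congr' ?_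
        (.of_forall fun τ => by simp [← pow_mul])
      filter_upwards [ψ.vanish] with τ hτ
      simp only [t244] at hτ
      simp only [Pi.pow_apply]
      linear_combination -hτ
    exact hsq.of_pow two_ne_zero
  have hO (k : Fin 3) : (fun τ => ψ.toFun τ k) =O[𝓝 0] fun τ => τ ^ t244Weights k := by
    fin_cases k
    exacts [hlin 0, hlin 1, hquad]
  choose u hu hfac using fun k =>
    (natCast_le_analyticOrderAt (hψ k)).mp
      (((hψ k).natCast_le_analyticOrderAt_iff_isBigO _).mpr (hO k))
  have hcurve : ∀ᶠ τ in 𝓝 0, ψ.toFun τ = weightedCurve t244Weights (fun k => u k τ) τ := by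
    filter_upwards [Filter.eventually_all.mpr hfac] with τ hτ
    funext k
    simpa [weightedCurve] using hτ k
  have hcont : ContinuousAt (fun τ k => u k τ) 0 := continuousAt_pi.mpr fun k => (hu k).continuousAt
  have hcone : ∀ᶠ τ in 𝓝 0, t244 (u · τ) = 0 := by
    refine ((continuous_t244.continuousAt.comp hcont).eventuallyEq_nhds_iff_eventuallyEq_nhdsNE
      continuousAt_const).mp ?_
    filter_upwards [self_mem_nhdsWithin, nhdsWithin_le_nhds (hcurve.and ψ.vanish)]
      with τ (hτ : τ ≠ 0) ⟨hψτ, hvan⟩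
    rw [hψτ, t244_weightedCurve] at hvan
    exact (mul_eq_zero.mp hvan).resolve_left (pow_ne_zero 4 hτ)
  exact ⟨_, hcont, hcone.and hcurve⟩

lemma mem_arcFiltration_t244_iff {g : (Fin 3 → ℂ) → ℂ} {i : ℕ} :
    g ∈ arcFiltration 3 t244 i ↔ AnalyticAt ℂ g 0 ∧
      ∀ p, t244 p = 0 → (fun τ => g (weightedCurve t244Weights p τ)) =O[𝓝 0] fun τ => τ ^ i := by
  refine ⟨fun ⟨hg, hv⟩ => ⟨hg, fun p hp => (le_vArc_iff hg i).mp hv (weightedCurveArc p hp)⟩,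
    fun ⟨hg, hcone⟩ => ⟨hg, (le_vArc_iff hg i).mpr fun ψ => ?_⟩⟩
  obtain ⟨P, hP⟩ := hg
  obtain ⟨u, hu, hev⟩ := ψ.exists_eq_weightedCurve
  have hlow : ∀ᶠ τ in 𝓝 0, ∀ j < i,
      eval (u τ) (weightedHomogeneousComponent t244Weights j (taylorPolynomial P i)) = 0 :=
    hev.mono fun τ hτ =>
      hP.eval_weightedHomogeneousComponent_eq_zero t244Weights_ne_zero le_rfl (hcone _ hτ.1)
  refine (hP.isBigO_comp_weightedCurve t244Weights_ne_zero hu hlow).congr' ?_ EventuallyEq.rfl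
  filter_upwards [hev] with τ hτ
  simp [hτ.2]

lemma sub_mem_arcFiltration_t244_succ_iff {g : (Fin 3 → ℂ) → ℂ} {i : ℕ}
    (hg : g ∈ arcFiltration 3 t244 i) {P : FormalMultilinearSeries ℂ (Fin 3 → ℂ) ℂ}
    (hP : HasFPowerSeriesAt g P 0) {G : MvPolynomial (Fin 3) ℂ}
    (hG : IsWeightedHomogeneous t244Weights G i) :
    g - (fun q => eval q G) ∈ arcFiltration 3 t244 (i + 1) ↔ ∀ p, t244 p = 0 →
      eval p G =
        eval p (weightedHomogeneousComponent t244Weights i (taylorPolynomial P (i + 1))) := by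
  have hcone := (mem_arcFiltration_t244_iff.mp hg).2
  rw [mem_arcFiltration_t244_iff]
  simp only [hg.1.sub (AnalyticOnNhd.eval_mvPolynomial G 0 trivial), true_and]
  refine forall₂_congr fun p hp => ?_
  have hlow := hP.eval_weightedHomogeneousComponent_eq_zero t244Weights_ne_zero i.le_succ
    (hcone p hp)
  have hrem := hP.isBigO_comp_weightedCurve_sub_sum t244Weights_ne_zero
    (continuousAt_const (y := p)) (le_refl (i + 1))
  set T := taylorPolynomial P (i + 1)
  have hsplit (τ : ℂ) : (g - fun q => eval q G) (weightedCurve t244Weights p τ) =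
      (g (weightedCurve t244Weights p τ) - ∑ j ∈ Finset.range (i + 1),
        τ ^ j * eval p (weightedHomogeneousComponent t244Weights j T)) +
      (eval p (weightedHomogeneousComponent t244Weights i T) - eval p G) * τ ^ i := by
    rw [Finset.sum_range_succ, Finset.sum_eq_zero fun j hj => by
      rw [hlow j (Finset.mem_range.mp hj), mul_zero], Pi.sub_apply, hG.eval_weightedCurve]
    ring
  simp only [hsplit]
  rw [hrem.add_iff_right, isBigO_mul_pow_pow_succ_iff, sub_eq_zero, eq_comm]

-- `i - 1` truncates, so in degree `0` there is only the monomial `1`.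
noncomputable def t244Basis (i : ℕ) : Fin ((i + 1) + (i - 1)) → MvPolynomial (Fin 3) ℂ :=
  Fin.append (fun a : Fin (i + 1) => X 0 ^ (a : ℕ) * X 1 ^ (i - a))
    (fun a : Fin (i - 1) => X 0 ^ (a : ℕ) * X 1 ^ (i - 2 - a) * X 2)

lemma isWeightedHomogeneous_t244Basis (i : ℕ) (k : Fin ((i + 1) + (i - 1))) :
    IsWeightedHomogeneous t244Weights (t244Basis i k) i := by
  have hX (l : Fin 3) := isWeightedHomogeneous_X ℂ t244Weights l
  refine Fin.addCases (fun a => ?_) (fun a => ?_) k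
  · simpa [t244Basis, t244Weights, Nat.add_sub_cancel' (Nat.lt_succ_iff.mp a.isLt)] using
      ((hX 0).pow (a : ℕ)).mul ((hX 1).pow (i - a))
  · convert (((hX 0).pow (a : ℕ)).mul ((hX 1).pow (i - 2 - a))).mul (hX 2) using 1
    · simp [t244Basis]
    · simp only [t244Weights, Matrix.cons_val_zero, Matrix.cons_val_one, Matrix.cons_val,
        smul_eq_mul, mul_one]
      omega

abbrev t244Cone : Type := {p : Fin 3 → ℂ // t244 p = 0}

noncomputable def t244ConeBasis (i : ℕ) : Fin ((i + 1) + (i - 1)) → t244Cone → ℂ :=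
  fun k p => eval p.1 (t244Basis i k)

lemma monomial_mem_span_t244ConeBasis {i : ℕ} (e : ℕ) : ∀ a b, a + b + 2 * e = i →
    (fun p : t244Cone => p.1 0 ^ a * p.1 1 ^ b * p.1 2 ^ e) ∈
      Submodule.span ℂ (Set.range (t244ConeBasis i)) := by
  induction e using Nat.strong_induction_on with
  | _ e ih =>
  intro a b hab
  match e, ih with
  | 0, _ =>
    refine Submodule.subset_span ⟨Fin.castAdd (i - 1) ⟨a, by omega⟩, funext fun p => ?_⟩
    simp only [t244ConeBasis, t244Basis, Fin.append_left]
    simp [show i - a = b by omega]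
  | 1, _ =>
    refine Submodule.subset_span ⟨Fin.natAdd (i + 1) ⟨a, by omega⟩, funext fun p => ?_⟩
    simp only [t244ConeBasis, t244Basis, Fin.append_right]
    simp [show i - 2 - a = b by omega]
  | e + 2, ih =>
    have hreduce : (fun p : t244Cone => p.1 0 ^ a * p.1 1 ^ b * p.1 2 ^ (e + 2)) =
        -(fun p : t244Cone => p.1 0 ^ (a + 4) * p.1 1 ^ b * p.1 2 ^ e) -
          (fun p : t244Cone => p.1 0 ^ a * p.1 1 ^ (b + 4) * p.1 2 ^ e) := by
      funext ⟨p, hp⟩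
      simp only [t244] at hp
      simp only [Pi.sub_apply, Pi.neg_apply]
      linear_combination p 0 ^ a * p 1 ^ b * p 2 ^ e * hp
    rw [hreduce]
    exact Submodule.sub_mem _ (Submodule.neg_mem _ (ih e (by omega) _ _ (by omega)))
      (ih e (by omega) _ _ (by omega))

lemma eval_mem_span_t244ConeBasis {i : ℕ} {G : MvPolynomial (Fin 3) ℂ}
    (hG : IsWeightedHomogeneous t244Weights G i) :
    (fun p : t244Cone => eval p.1 G) ∈ Submodule.span ℂ (Set.range (t244ConeBasis i)) := by
  have hG_sum : (fun p : t244Cone => eval p.1 G) = ∑ m ∈ G.support,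
      G.coeff m • fun p : t244Cone => p.1 0 ^ m 0 * p.1 1 ^ m 1 * p.1 2 ^ m 2 := by
    funext p
    conv_lhs => rw [G.as_sum]
    simp only [map_sum, eval_monomial, Finset.sum_apply, Pi.smul_apply, smul_eq_mul]
    refine Finset.sum_congr rfl fun m _ => ?_
    rw [Finsupp.prod_fintype _ _ (by simp), Fin.prod_univ_three]
  rw [hG_sum]
  refine Submodule.sum_mem _ fun m hm => Submodule.smul_mem _ _ ?_
  refine monomial_mem_span_t244ConeBasis (m 2) (m 0) (m 1) ?_
  have hw := hG (mem_support_iff.mp hm)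
  simp only [Finsupp.weight_eq_sum, Fin.sum_univ_three, t244Weights, Matrix.cons_val_zero,
    Matrix.cons_val_one, Matrix.cons_val, smul_eq_mul, mul_one] at hw
  omega

lemma linearIndependent_t244ConeBasis (i : ℕ) : LinearIndependent ℂ (t244ConeBasis i) := by
  refine Fintype.linearIndependent_iff.mpr fun γ hγ => ?_
  set α : Fin (i + 1) → ℂ := fun a => γ (Fin.castAdd (i - 1) a)
  set β : Fin (i - 1) → ℂ := fun a => γ (Fin.natAdd (i + 1) a)
  have heval (p : t244Cone) : (∑ a, α a * (p.1 0 ^ (a : ℕ) * p.1 1 ^ (i - a))) +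
      (∑ a, β a * (p.1 0 ^ (a : ℕ) * p.1 1 ^ (i - 2 - a))) * p.1 2 = 0 := by
    simpa [Fin.sum_univ_add, t244ConeBasis, t244Basis, Finset.sum_mul, mul_assoc, α, β]
      using congrFun hγ p
  -- evaluate at the points `(m, 1, ±z)` of the surface, `z² = -(m⁴ + 1)`, and add / subtract
  have hαβ (m : ℕ) : ∑ a, α a * (m : ℂ) ^ (a : ℕ) = 0 ∧ ∑ a, β a * (m : ℂ) ^ (a : ℕ) = 0 := by
    obtain ⟨z, hz⟩ := IsAlgClosed.exists_pow_nat_eq (-((m : ℂ) ^ 4 + 1)) two_pos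
    have hz0 : z ≠ 0 := by
      rintro rfl
      exact_mod_cast (by linear_combination hz : (m : ℂ) ^ 4 + 1 = 0)
    have hon (z' : ℂ) (hz' : z' ^ 2 = z ^ 2) : t244 ![m, 1, z'] = 0 := by
      simp only [t244, Matrix.cons_val_zero, Matrix.cons_val_one, Matrix.cons_val]
      linear_combination hz' + hz
    have hplus := heval ⟨_, hon z rfl⟩
    have hminus := heval ⟨_, hon (-z) (neg_sq z)⟩
    simp only [Matrix.cons_val_zero, Matrix.cons_val_one, Matrix.cons_val, one_pow,
      mul_one] at hplus hminus
    refine ⟨by linear_combination (hplus + hminus) / 2, ?_⟩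
    have h2z : (∑ a, β a * (m : ℂ) ^ (a : ℕ)) * (2 * z) = 0 := by linear_combination hplus - hminus
    exact (mul_eq_zero.mp h2z).resolve_right (mul_ne_zero two_ne_zero hz0)
  have hα := eq_zero_of_forall_sum_mul_natCast_pow_eq_zero fun m => (hαβ m).1
  have hβ := eq_zero_of_forall_sum_mul_natCast_pow_eq_zero fun m => (hαβ m).2
  exact fun k => Fin.addCases (fun a => congrFun hα a) (fun a => congrFun hβ a) k

lemma dimQuotEq_arcFiltration_t244 (i : ℕ) :
    dimQuotEq (arcFiltration 3 t244) i ((i + 1) + (i - 1)) := by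
  refine dimQuotEq_of_linearIndependent (b := fun k q => eval q (t244Basis i k))
    (fun k => ?_) (linearIndependent_t244ConeBasis i) fun g hg => ?_
  · refine mem_arcFiltration_t244_iff.mpr
      ⟨AnalyticOnNhd.eval_mvPolynomial _ 0 trivial, fun p _ => ?_⟩
    simp only [(isWeightedHomogeneous_t244Basis i k).eval_weightedCurve]
    exact ((isBigO_refl _ _).const_mul_left (eval p (t244Basis i k))).congr_left
      fun τ => mul_comm _ _
  · obtain ⟨P, hP⟩ := hg.1
    refine ⟨fun p =>
        eval p.1 (weightedHomogeneousComponent t244Weights i (taylorPolynomial P (i + 1))),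
      eval_mem_span_t244ConeBasis (weightedHomogeneousComponent_isWeightedHomogeneous _ _),
      fun c => ?_⟩
    have hG : IsWeightedHomogeneous t244Weights (∑ k, c k • t244Basis i k) i := by
      rw [← mem_weightedHomogeneousSubmodule]
      exact Submodule.sum_mem _ fun k _ => Submodule.smul_mem _ _
        ((mem_weightedHomogeneousSubmodule _ _ _ _).mpr (isWeightedHomogeneous_t244Basis i k))
    have hcomb : ∑ k, c k • (fun q => eval q (t244Basis i k)) =
        fun q => eval q (∑ k, c k • t244Basis i k) := by
      funext q
      simp
    rw [hcomb, sub_mem_arcFiltration_t244_succ_iff hg hP hG, _root_.funext_iff]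
    simp [t244ConeBasis, Subtype.forall]

end T244

/-- For the parabolic surface singularity `T_{2,4,4}` (= `X₉`),
i.e. `(V,0) ⊆ (ℂ³,0)` defined by `x⁴ + y⁴ + z² = 0`, the Poincaré series of the arc
filtration is `P_{V,0}(t) = (1 - t⁴)/((1 - t)²(1 - t²))`. -/
theorem poincare_series_T244 :
    ∃ dimF : ℕ → ℕ,
      (∀ i, dimQuotEq
        (arcFiltration 3 (fun w : Fin 3 → ℂ => w 0 ^ 4 + w 1 ^ 4 + w 2 ^ 2)) i
        (dimF i)) ∧
      (PowerSeries.mk fun i => (dimF i : ℤ)) *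
          ((1 - PowerSeries.X) ^ 2 * (1 - PowerSeries.X ^ 2))
        = 1 - PowerSeries.X ^ 4 :=
  ⟨fun i => (i + 1) + (i - 1), dimQuotEq_arcFiltration_t244, mk_mul_eq_one_sub_X_pow_four⟩
end
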